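/- arXiv:1512.05024 — 5 statements merged into one kernel-verified Lean document; each statement's English description precedes it below -/
import Mathlib

section
/- For every integer n ≥ 6 there exists a nonempty finite set S of prime numbers such that n = Σ_{p ∈ S} (p + 1). -/
/-- A domain is atomic if every nonzero nonunit is a finite product of irreducible
elements (atoms). -/
def IsAtomicDomain (R : Type*) [CommRing R] : Prop :=
  ∀ x : R, x ≠ 0 → ¬ IsUnit x → ∃ s : Multiset R, (∀ a ∈ s, Irreducible a) ∧ s.prod = x

/-- A domain is primefree if it has no prime elements. -/
def Primefree (R : Type*) [CommRing R] : Prop :=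
  ∀ p : R, ¬ Prime p

/-- A domain has exactly `n` atoms if the set of its irreducible elements modulo the
equivalence relation of association (equivalently, the set of irreducible elements of
`Associates R`) has cardinality `n`. -/
def HasNAtoms (R : Type*) [CommRing R] (n : ℕ) : Prop :=
  Nat.card {a : Associates R // Irreducible a} = n

/-- A domain has exactly `m` maximal ideals if the set of its maximal ideals has
cardinality `m`. -/
def HasNMaxIdeals (R : Type*) [CommRing R] (m : ℕ) : Prop :=
  Nat.card {I : Ideal R // I.IsMaximal} = m

/-- Key lemma: every `n` that is `0` or at least `12` has a representation as a sum of
`p + 1` over a finite set of primes, avoiding any given forbidden number `x` with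
`13 ≤ x` and `n ≤ x + 12`. -/
lemma key_rep : ∀ n : ℕ, ∀ x : ℕ, 13 ≤ x → n ≤ x + 12 → (n = 0 ∨ 12 ≤ n) →
    ∃ S : Finset ℕ, (∀ p ∈ S, p.Prime) ∧ x ∉ S ∧ ∑ p ∈ S, (p + 1) = n := by
  intro n
  induction n using Nat.strong_induction_on with
  | _ n ih =>
  intro x hx13 hxn hn
  rcases hn with rfl | hn
  · exact ⟨∅, by simp, by simp, by simp⟩
  by_cases hbig : 38 ≤ n
  · -- recursive case via Bertrand's postulate
    obtain ⟨p, pp, hpk, hpk2⟩ := Nat.exists_prime_lt_and_le_two_mul ((n - 13) / 2) (by omega)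
    obtain ⟨S', hS'p, hS'x, hS's⟩ := ih (n - p - 1) (by omega) p (by omega) (by omega) (by omega)
    refine ⟨insert p S', ?_, ?_, ?_⟩
    · intro q hq
      rcases Finset.mem_insert.mp hq with rfl | hq
      · exact pp
      · exact hS'p q hq
    · intro hmem
      rcases Finset.mem_insert.mp hmem with h | hmem
      · omega
      · have hle : x + 1 ≤ ∑ q ∈ S', (q + 1) :=
          Finset.single_le_sum (f := fun q => q + 1) (fun i _ => Nat.zero_le _) hmem
      
        omega
    · rw [Finset.sum_insert hS'x, hS's]
      omega
  · -- base cases 12 ≤ n ≤ 37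
    interval_cases n
    · exact ⟨{3,7}, by decide, by simp; omega, by decide⟩
    · exact ⟨{2,3,5}, by decide, by simp; omega, by decide⟩
    · exact ⟨{5,7}, by decide, by simp; omega, by decide⟩
    · exact ⟨{2,3,7}, by decide, by simp; omega, by decide⟩
    · exact ⟨{3,11}, by decide, by simp; omega, by decide⟩
    · exact ⟨{2,5,7}, by decide, by simp; omega, by decide⟩
    · exact ⟨{3,5,7}, by decide, by simp; omega, by decide⟩
    · exact ⟨{2,3,11}, by decide, by simp; omega, by decide⟩
    · exact ⟨{7,11}, by decide, by simp; omega, by decide⟩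
    · exact ⟨{2,5,11}, by decide, by simp; omega, by decide⟩
    · exact ⟨{3,5,11}, by decide, by simp; omega, by decide⟩
    · exact ⟨{2,7,11}, by decide, by simp; omega, by decide⟩
    · exact ⟨{3,7,11}, by decide, by simp; omega, by decide⟩
    · exact ⟨{2,3,5,11}, by decide, by simp; omega, by decide⟩
    · exact ⟨{5,7,11}, by decide, by simp; omega, by decide⟩
    · exact ⟨{2,3,7,11}, by decide, by simp; omega, by decide⟩
    · -- 28
      by_cases h : x = 19
      · exact ⟨{3,23}, by decide, by simp; omega, by decide⟩
      · exact ⟨{7,19}, by decide, by simp; omega, by decide⟩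
    · exact ⟨{2,5,7,11}, by decide, by simp; omega, by decide⟩
    · exact ⟨{3,5,7,11}, by decide, by simp; omega, by decide⟩
    · -- 31
      by_cases h : x = 13
      · exact ⟨{2,3,5,17}, by decide, by simp; omega, by decide⟩
      · exact ⟨{2,5,7,13}, by decide, by simp; omega, by decide⟩
    · -- 32
      by_cases h : x = 13 ∨ x = 17
      · exact ⟨{11,19}, by decide, by simp; omega, by decide⟩
      · exact ⟨{13,17}, by decide, by simp; omega, by decide⟩
    · exact ⟨{2,3,5,7,11}, by decide, by simp; omega, by decide⟩
    · -- 34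
      by_cases h : x = 13 ∨ x = 19
      · exact ⟨{3,11,17}, by decide, by simp; omega, by decide⟩
      · exact ⟨{13,19}, by decide, by simp; omega, by decide⟩
    · -- 35
      by_cases h : x = 13 ∨ x = 17
      · exact ⟨{2,11,19}, by decide, by simp; omega, by decide⟩
      · exact ⟨{2,13,17}, by decide, by simp; omega, by decide⟩
    · -- 36
      by_cases h : x = 13
      · exact ⟨{5,11,17}, by decide, by simp; omega, by decide⟩
      · exact ⟨{3,5,11,13}, by decide, by simp; omega, by decide⟩
    · -- 37
      by_cases h : x = 13 ∨ x = 19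
      · exact ⟨{2,3,11,17}, by decide, by simp; omega, by decide⟩
      · exact ⟨{2,13,19}, by decide, by simp; omega, by decide⟩

theorem stmt1 (n : ℕ) (hn : 6 ≤ n) :
    ∃ S : Finset ℕ, S.Nonempty ∧ (∀ p ∈ S, p.Prime) ∧ ∑ p ∈ S, (p + 1) = n := by
  by_cases h : n ≤ 11
  · interval_cases n
    · exact ⟨{5}, ⟨5, by decide⟩, by decide, by decide⟩
    · exact ⟨{2,3}, ⟨2, by decide⟩, by decide, by decide⟩
    · exact ⟨{7}, ⟨7, by decide⟩, by decide, by decide⟩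
    · exact ⟨{2,5}, ⟨2, by decide⟩, by decide, by decide⟩
    · exact ⟨{3,5}, ⟨3, by decide⟩, by decide, by decide⟩
    · exact ⟨{2,7}, ⟨2, by decide⟩, by decide, by decide⟩
  · obtain ⟨S, h1, _, h3⟩ := key_rep n (n + 13) (by omega) (by omega) (by omega)
    refine ⟨S, ?_, h1, h3⟩
    rw [Finset.nonempty_iff_ne_empty]
    rintro rfl
    simp at h3
    omega
end

section
/- Let R be an atomic integral domain with no prime elements, with exactly n atoms and exactly m maximal ideals, where n and m are positive natural numbers. Then 3·m ≤ n. -/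
section Aux

variable {R : Type*} [CommRing R] [IsDomain R]

/-- Atoms lying in `M` and in no other maximal ideal. -/
def OnlyIn (M : Ideal R) : Set R :=
  {r | Irreducible r ∧ r ∈ M ∧ ∀ N : Ideal R, N.IsMaximal → N ≠ M → r ∉ N}

lemma mem_of_dvd_mem {M : Ideal R} {a b : R} (h : a ∣ b) (ha : a ∈ M) : b ∈ M := by
  obtain ⟨c, rfl⟩ := h
  exact M.mul_mem_right c ha

lemma maximal_exists_ne_zero (hirr : ∃ r : R, Irreducible r) {M : Ideal R}
    (hM : M.IsMaximal) : ∃ x : R, x ∈ M ∧ x ≠ 0 := by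
  obtain ⟨r, hr⟩ := hirr
  by_cases h : M = ⊥
  · exfalso
    have hspan : Ideal.span {r} ≠ ⊤ := fun h' => hr.not_isUnit (Ideal.span_singleton_eq_top.mp h')
    obtain ⟨N, hN, hle⟩ := Ideal.exists_le_maximal _ hspan
    have hMN : M = N := hM.eq_of_le hN.ne_top (h ▸ bot_le)
    have hrM : r ∈ M := hMN ▸ hle (Ideal.mem_span_singleton_self r)
    rw [h, Submodule.mem_bot] at hrM
    exact hr.ne_zero hrM
  · obtain ⟨x, hx1, hx2⟩ := (Submodule.ne_bot_iff M).mp h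
    exact ⟨x, hx1, hx2⟩

variable [Fintype {I : Ideal R // I.IsMaximal}]

lemma exists_mem_notmem (hirr : ∃ r : R, Irreducible r) {M : Ideal R} (hM : M.IsMaximal) :
    ∃ x : R, x ∈ M ∧ x ≠ 0 ∧ ∀ N : Ideal R, N.IsMaximal → N ≠ M → x ∉ N := by
  classical
  set s : Finset {I : Ideal R // I.IsMaximal} := Finset.univ.erase ⟨M, hM⟩ with hs
  have hp : ∀ i ∈ s, i ≠ (⟨M, hM⟩ : {I : Ideal R // I.IsMaximal}) →
      i ≠ (⟨M, hM⟩ : {I : Ideal R // I.IsMaximal}) → (i.1 : Ideal R).IsPrime :=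
    fun i _ _ _ => i.2.isPrime
  have hsub := Ideal.subset_union_prime (f := fun i : {I : Ideal R // I.IsMaximal} => i.1)
    ⟨M, hM⟩ ⟨M, hM⟩ hp (I := M)
  have hnot : ¬ ((M : Set R) ⊆ ⋃ i ∈ (↑s : Set {I : Ideal R // I.IsMaximal}), (i.1 : Set R)) := by
    intro h
    obtain ⟨i, his, hle⟩ := hsub.mp h
    exact (Finset.ne_of_mem_erase his) (Subtype.ext (hM.eq_of_le i.2.ne_top hle).symm)
  rw [Set.not_subset] at hnot
  obtain ⟨x, hxM, hx⟩ := hnot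
  have hxnot : ∀ N : Ideal R, N.IsMaximal → N ≠ M → x ∉ N := by
    intro N hN hNM hxN
    refine hx ?_
    rw [Set.mem_iUnion₂]
    exact ⟨⟨N, hN⟩, Finset.mem_coe.mpr (Finset.mem_erase.mpr
      ⟨fun h => hNM (congrArg Subtype.val h), Finset.mem_univ _⟩), hxN⟩
  by_cases hx0 : x = 0
  · obtain ⟨y, hyM, hy0⟩ := maximal_exists_ne_zero hirr hM
    refine ⟨y, hyM, hy0, ?_⟩
    intro N hN hNM _
    exact hxnot N hN hNM (by rw [hx0]; exact N.zero_mem)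
  · exact ⟨x, hxM, hx0, hxnot⟩

lemma onlyIn_nonempty (hatomic : IsAtomicDomain R) (hirr : ∃ r : R, Irreducible r)
    {M : Ideal R} (hM : M.IsMaximal) : (OnlyIn M).Nonempty := by
  obtain ⟨x, hxM, hx0, hxnot⟩ := exists_mem_notmem hirr hM
  have hxu : ¬ IsUnit x := fun h => hM.ne_top (Ideal.eq_top_of_isUnit_mem M hxM h)
  obtain ⟨ms, hms, hprod⟩ := hatomic x hx0 hxu
  obtain ⟨t, hts, htM⟩ := (hM.isPrime.multiset_prod_mem_iff_exists_mem ms).mp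
    (by rw [hprod]; exact hxM)
  refine ⟨t, hms t hts, htM, ?_⟩
  intro N hN hNM htN
  exact hxnot N hN hNM (mem_of_dvd_mem (hprod ▸ Multiset.dvd_prod hts) htN)

lemma exists_onlyIn_dvd [Finite {a : Associates R // Irreducible a}]
    (hatomic : IsAtomicDomain R) (hirr : ∃ r : R, Irreducible r)
    {M : Ideal R} (hM : M.IsMaximal) {x : R} (hx : x ∈ M) :
    ∃ t ∈ OnlyIn M, t ∣ x := by
  classical
  set S : Set (Associates R) := Associates.mk '' OnlyIn M with hSdef
  have hSfin : S.Finite := by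
    have hsub : S ⊆ Set.range (fun q : {a : Associates R // Irreducible a} => (q.1 : Associates R)) := by
      rintro q ⟨t, ht, rfl⟩
      exact ⟨⟨Associates.mk t, Associates.irreducible_mk.mpr ht.1⟩, rfl⟩
    exact (Set.finite_range _).subset hsub
  have hrep0 : ∀ q : Associates R, ∃ t : R, q ∈ S → t ∈ OnlyIn M ∧ Associates.mk t = q := by
    intro q
    by_cases h : q ∈ S
    · obtain ⟨t, ht, hq⟩ := h
      exact ⟨t, fun _ => ⟨ht, hq⟩⟩
    · exact ⟨1, fun hq => absurd hq h⟩
  choose rep hrep using hrep0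
  set P : R := ∏ q ∈ hSfin.toFinset, rep q with hPdef
  have hdvdP : ∀ t ∈ OnlyIn M, t ∣ P := by
    intro t ht
    have hmem : Associates.mk t ∈ S := ⟨t, ht, rfl⟩
    have h2 : t ∣ rep (Associates.mk t) :=
      ((Associates.mk_eq_mk_iff_associated.mp (hrep _ hmem).2).symm).dvd
    exact h2.trans (Finset.dvd_prod_of_mem rep (hSfin.mem_toFinset.mpr hmem))
  obtain ⟨t₀, ht₀⟩ := onlyIn_nonempty hatomic hirr hM
  have hPM : P ∈ M := mem_of_dvd_mem (hdvdP t₀ ht₀) ht₀.2.1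
  have hPnot : ∀ N : Ideal R, N.IsMaximal → N ≠ M → P ∉ N := by
    intro N hN hNM hPN
    haveI := hN.isPrime
    obtain ⟨q, hq, hrepq⟩ := (Ideal.IsPrime.prod_mem_iff).mp hPN
    exact (hrep q (hSfin.mem_toFinset.mp hq)).1.2.2 N hN hNM hrepq
  set s : Finset {I : Ideal R // I.IsMaximal} := Finset.univ.erase ⟨M, hM⟩ with hs
  set K : Ideal R := ∏ i ∈ s, (i : {I : Ideal R // I.IsMaximal}).1 with hK
  have hKle : ∀ i ∈ s, K ≤ i.1 := fun i hi => le_trans Ideal.prod_le_inf (Finset.inf_le hi)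
  have hsup : Ideal.span {P} ⊔ K = ⊤ := by
    by_contra h
    obtain ⟨N, hN, hle⟩ := Ideal.exists_le_maximal _ h
    have hPN : P ∈ N := (le_sup_left.trans hle) (Ideal.mem_span_singleton_self P)
    have hKN : K ≤ N := le_sup_right.trans hle
    obtain ⟨i, his, hiN⟩ := (hN.isPrime.prod_le).mp hKN
    have hiNe : i.1 = N := i.2.eq_of_le hN.ne_top hiN
    have hiM : i.1 ≠ M := fun h' => (Finset.ne_of_mem_erase his) (Subtype.ext h')
    exact hPnot i.1 i.2 hiM (by rw [hiNe]; exact hPN)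
  have h1mem : (1 : R) ∈ Ideal.span {P} ⊔ K := by rw [hsup]; exact Submodule.mem_top
  obtain ⟨p, hp, k, hk, hpk⟩ := Submodule.mem_sup.mp h1mem
  have hPp : P ∣ p := Ideal.mem_span_singleton.mp hp
  have hspanle : Ideal.span {P} ≤ M := Ideal.span_le.mpr (Set.singleton_subset_iff.mpr hPM)
  set c : R := p + k * x with hc
  have hcM : c ∈ M := M.add_mem (hspanle hp) (M.mul_mem_left k hx)
  by_cases hc0 : c = 0
  · refine ⟨t₀, ht₀, ?_⟩
    have h0 : p + k * x = 0 := by rw [← hc]; exact hc0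
    have hxeq : x = p * x - p := by linear_combination (-x) * hpk + h0
    have hdp : t₀ ∣ p := (hdvdP t₀ ht₀).trans hPp
    rw [hxeq]
    exact dvd_sub (hdp.mul_right x) hdp
  · have hcu : ¬ IsUnit c := fun h => hM.ne_top (Ideal.eq_top_of_isUnit_mem M hcM h)
    obtain ⟨ms, hms, hprod⟩ := hatomic c hc0 hcu
    obtain ⟨t, hts, htM⟩ := (hM.isPrime.multiset_prod_mem_iff_exists_mem ms).mp
      (by rw [hprod]; exact hcM)
    have htc : t ∣ c := hprod ▸ Multiset.dvd_prod hts
    have hcnot : ∀ N : Ideal R, N.IsMaximal → N ≠ M → c ∉ N := by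
      intro N hN hNM hcN
      have hkN : k ∈ N := hKle ⟨N, hN⟩ (Finset.mem_erase.mpr
        ⟨fun h => hNM (congrArg Subtype.val h), Finset.mem_univ _⟩) hk
      have hpN : p ∈ N := by
        have hpe : p = c - k * x := by rw [hc]; ring
        rw [hpe]; exact N.sub_mem hcN (N.mul_mem_right x hkN)
      have h1N : (1 : R) ∈ N := by rw [← hpk]; exact N.add_mem hpN hkN
      exact hN.ne_top (N.eq_top_of_isUnit_mem h1N isUnit_one)
    have htOnly : t ∈ OnlyIn M :=
      ⟨hms t hts, htM, fun N hN hNM htN => hcnot N hN hNM (mem_of_dvd_mem htc htN)⟩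
    refine ⟨t, htOnly, ?_⟩
    have htp : t ∣ p := (hdvdP t htOnly).trans hPp
    have hxeq : x = c - p + p * x := by linear_combination (-1 : R) * hc + (-x) * hpk
    rw [hxeq]
    exact dvd_add (dvd_sub htc htp) (htp.mul_right x)

lemma exists_three [Finite {a : Associates R // Irreducible a}]
    (hatomic : IsAtomicDomain R) (hpf : Primefree R) (hirr : ∃ r : R, Irreducible r)
    {M : Ideal R} (hM : M.IsMaximal) :
    ∃ a b c : R, a ∈ OnlyIn M ∧ b ∈ OnlyIn M ∧ c ∈ OnlyIn M ∧
      ¬ Associated a b ∧ ¬ Associated a c ∧ ¬ Associated b c := by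
  obtain ⟨a, ha⟩ := onlyIn_nonempty hatomic hirr hM
  by_cases h1 : ∀ t ∈ OnlyIn M, Associated a t
  · exfalso
    refine hpf a ⟨ha.1.ne_zero, ha.1.not_isUnit, ?_⟩
    intro u v huv
    have huvM : u * v ∈ M := mem_of_dvd_mem huv ha.2.1
    rcases hM.isPrime.mem_or_mem huvM with h | h
    · obtain ⟨t, ht, htd⟩ := exists_onlyIn_dvd hatomic hirr hM h
      exact Or.inl ((h1 t ht).dvd.trans htd)
    · obtain ⟨t, ht, htd⟩ := exists_onlyIn_dvd hatomic hirr hM h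
      exact Or.inr ((h1 t ht).dvd.trans htd)
  push_neg at h1
  obtain ⟨b, hb, hab⟩ := h1
  by_cases h2 : ∀ t ∈ OnlyIn M, Associated a t ∨ Associated b t
  · exfalso
    have hsum : a + b ∈ M := M.add_mem ha.2.1 hb.2.1
    obtain ⟨t, ht, htd⟩ := exists_onlyIn_dvd hatomic hirr hM hsum
    rcases h2 t ht with h | h
    · have hdvd : a ∣ b := (dvd_add_right (dvd_refl a)).mp (h.dvd.trans htd)
      exact hab (ha.1.associated_of_dvd hb.1 hdvd)
    · have hdvd : b ∣ a := (dvd_add_left (dvd_refl b)).mp (h.dvd.trans htd)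
      exact hab (hb.1.associated_of_dvd ha.1 hdvd).symm
  push_neg at h2
  obtain ⟨c, hc, hac, hbc⟩ := h2
  exact ⟨a, b, c, ha, hb, hc, hab, hac, hbc⟩

end Aux

theorem stmt2 (R : Type*) [CommRing R] [IsDomain R] (n m : ℕ) (hn : 0 < n) (hm : 0 < m)
    (hatomic : IsAtomicDomain R) (hpf : Primefree R)
    (hatoms : HasNAtoms R n) (hmax : HasNMaxIdeals R m) :
    3 * m ≤ n := by
  classical
  have hatoms' : Nat.card {a : Associates R // Irreducible a} = n := hatoms
  have hmax' : Nat.card {I : Ideal R // I.IsMaximal} = m := hmax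
  haveI hFinMax : Finite {I : Ideal R // I.IsMaximal} :=
    Nat.finite_of_card_ne_zero (by rw [hmax']; omega)
  haveI hFinAtoms : Finite {a : Associates R // Irreducible a} :=
    Nat.finite_of_card_ne_zero (by rw [hatoms']; omega)
  haveI : Fintype {I : Ideal R // I.IsMaximal} := Fintype.ofFinite _
  have hne : Nonempty {a : Associates R // Irreducible a} :=
    (Nat.card_pos_iff.mp (by rw [hatoms']; exact hn)).1
  obtain ⟨q⟩ := hne
  obtain ⟨r, hr⟩ := Associates.mk_surjective q.1
  have hirr : ∃ r : R, Irreducible r := ⟨r, Associates.irreducible_mk.mp (hr ▸ q.2)⟩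
  have key : ∀ M : {I : Ideal R // I.IsMaximal},
      ∃ f : Fin 3 → {a : Associates R // Irreducible a},
        Function.Injective f ∧ ∀ i, ∃ s ∈ OnlyIn M.1, Associates.mk s = (f i).1 := by
    intro M
    obtain ⟨a, b, c, ha, hb, hc, hab, hac, hbc⟩ := exists_three hatomic hpf hirr M.2
    refine ⟨![⟨Associates.mk a, Associates.irreducible_mk.mpr ha.1⟩,
              ⟨Associates.mk b, Associates.irreducible_mk.mpr hb.1⟩,
              ⟨Associates.mk c, Associates.irreducible_mk.mpr hc.1⟩], ?_, ?_⟩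
    · intro i j hij
      have hba : ¬ Associated b a := fun h => hab h.symm
      have hca : ¬ Associated c a := fun h => hac h.symm
      have hcb : ¬ Associated c b := fun h => hbc h.symm
      fin_cases i <;> fin_cases j <;>
        first
          | rfl
          | (exfalso
             simp [Subtype.ext_iff, Associates.mk_eq_mk_iff_associated] at hij
             first
               | exact hab hij | exact hba hij | exact hac hij
               | exact hca hij | exact hbc hij | exact hcb hij)
    · intro i
      fin_cases i
      · exact ⟨a, ha, rfl⟩
      · exact ⟨b, hb, rfl⟩
      · exact ⟨c, hc, rfl⟩
  choose g hginj hgmem using key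
  have hFinj : Function.Injective
      (fun p : {I : Ideal R // I.IsMaximal} × Fin 3 => g p.1 p.2) := by
    rintro ⟨M, i⟩ ⟨N, j⟩ h
    simp only at h
    have hMN : M = N := by
      by_contra hne'
      obtain ⟨s, hs, hse⟩ := hgmem M i
      obtain ⟨s', hs', hse'⟩ := hgmem N j
      have hmk : Associates.mk s = Associates.mk s' := by rw [hse, hse', h]
      have hassoc : Associated s s' := Associates.mk_eq_mk_iff_associated.mp hmk
      have hs'M : s' ∈ M.1 := mem_of_dvd_mem hassoc.dvd hs.2.1
      exact hs'.2.2 M.1 M.2 (fun hh => hne' (Subtype.ext hh)) hs'M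
    subst hMN
    have hij : i = j := hginj M h
    rw [hij]
  have hcard := Nat.card_le_card_of_injective _ hFinj
  rw [Nat.card_prod, hmax', hatoms', Nat.card_eq_fintype_card, Fintype.card_fin] at hcard
  omega
end

section
/- Let q = p^a be a prime power and let R be a commutative integral domain that is an algebra over the finite field F_q with q elements. Suppose R is atomic, R has no prime elements, and R is not a field. Then R has at least q + 1 atoms: there exist q + 1 irreducible elements of R that are pairwise non-associated. -/
private lemma prod_sub_unit {R : Type*} [CommRing R] (π : R)
    (s : Multiset R) (h : ∀ α ∈ s, ∃ u : Rˣ, π ∣ α - u) : ∃ u : Rˣ, π ∣ s.prod - u := by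
  induction s using Multiset.induction_on with
  | empty => exact ⟨1, by simp⟩
  | cons a t ih =>
    obtain ⟨u, hu⟩ := h a (Multiset.mem_cons_self a t)
    obtain ⟨v, hv⟩ := ih (fun α hα => h α (Multiset.mem_cons_of_mem hα))
    refine ⟨u * v, ?_⟩
    have heq : (a ::ₘ t).prod - ((u * v : Rˣ) : R)
        = a * (t.prod - (v : R)) + (v : R) * (a - (u : R)) := by
      rw [Multiset.prod_cons, Units.val_mul]; ring
    rw [heq]
    exact dvd_add (hv.mul_left a) (hu.mul_left (v : R))

theorem stmt12 (p a : ℕ) (hp : Fact p.Prime) (ha : 0 < a)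
    (R : Type*) [CommRing R] [IsDomain R] [Algebra (GaloisField p a) R]
    (hatomic : IsAtomicDomain R) (hpf : Primefree R) (hnf : ¬ IsField R) :
    ∃ f : Fin (p ^ a + 1) → R, (∀ i, Irreducible (f i)) ∧
      ∀ i j, i ≠ j → ¬ Associated (f i) (f j) := by
  by_contra hcon
  set φ : GaloisField p a →+* R := algebraMap (GaloisField p a) R with hφ
  -- there is a nonzero nonunit
  have hx : ∃ x : R, x ≠ 0 ∧ ¬ IsUnit x := by
    by_contra h
    push_neg at h
    exact hnf ⟨exists_pair_ne R, mul_comm, fun {α} hα => (h α hα).exists_right_inv⟩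
  obtain ⟨x, hx0, hxu⟩ := hx
  obtain ⟨s0, hs0i, hs0p⟩ := hatomic x hx0 hxu
  have hs0ne : s0 ≠ 0 := by
    rintro rfl
    rw [Multiset.prod_zero] at hs0p
    exact hxu (hs0p ▸ isUnit_one)
  obtain ⟨π, hπs⟩ := Multiset.exists_mem_of_ne_zero hs0ne
  have hπ : Irreducible π := hs0i π hπs
  -- key lemma : every atom not associated to π is a unit mod π
  have key : ∀ α : R, Irreducible α → ¬ Associated α π → ∃ u : Rˣ, π ∣ α - u := by
    intro α hαi hαπ
    by_contra hno
    push_neg at hno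
    have hnu : ∀ c : GaloisField p a, ¬ IsUnit (α + φ c * π) := by
      intro c hc
      obtain ⟨u, hu⟩ := hc
      apply hno u
      rw [hu]
      have : α - (α + φ c * π) = π * (-(φ c)) := by ring
      exact this ▸ dvd_mul_right π _
    have hβ : ∀ c : GaloisField p a, ∃ β : R, Irreducible β ∧ β ∣ (α + φ c * π) := by
      intro c
      have hne : α + φ c * π ≠ 0 := by
        intro h0
        rcases eq_or_ne c 0 with rfl | hc
        · rw [map_zero, zero_mul, add_zero] at h0
          exact hαi.ne_zero h0
        · have hcu : IsUnit (φ (-c)) := (isUnit_iff_ne_zero.mpr (neg_ne_zero.mpr hc)).map φ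
          have hα' : π * φ (-c) = α := by rw [map_neg]; linear_combination -h0
          exact hαπ (Associated.symm ⟨hcu.unit, by rw [IsUnit.unit_spec]; exact hα'⟩)
      obtain ⟨t, hti, htp⟩ := hatomic _ hne (hnu c)
      have htne : t ≠ 0 := by
        rintro rfl
        rw [Multiset.prod_zero] at htp
        exact hnu c (htp ▸ isUnit_one)
      obtain ⟨β, hβt⟩ := Multiset.exists_mem_of_ne_zero htne
      exact ⟨β, hti β hβt, htp ▸ Multiset.dvd_prod hβt⟩
    choose β hβi hβd using hβ
    have hβπ : ∀ c, ¬ Associated (β c) π := by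
      intro c hac
      have hπd : π ∣ α + φ c * π := hac.symm.dvd.trans (hβd c)
      have hπα : π ∣ α := by
        have h5 := dvd_sub hπd (Dvd.intro_left (φ c) rfl)
        rwa [add_sub_cancel_right] at h5
      obtain ⟨z, hz⟩ := hπα
      rcases hαi.isUnit_or_isUnit hz with h | h
      · exact hπ.not_isUnit h
      · exact hαπ (Associated.symm ⟨h.unit, by rw [IsUnit.unit_spec]; exact hz.symm⟩)
    have hββ : ∀ c d, c ≠ d → ¬ Associated (β c) (β d) := by
      intro c d hcd hass
      have h1 : β c ∣ α + φ c * π := hβd c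
      have h2 : β c ∣ α + φ d * π := hass.dvd.trans (hβd d)
      have h3 : β c ∣ φ (c - d) * π := by
        have heq : φ (c - d) * π = (α + φ c * π) - (α + φ d * π) := by
          rw [map_sub]; ring
        exact heq ▸ dvd_sub h1 h2
      obtain ⟨w, hw⟩ := (isUnit_iff_ne_zero.mpr (sub_ne_zero.mpr hcd)).map φ
      have h4 : β c ∣ π := by
        have : π = (↑w⁻¹ : R) * (φ (c - d) * π) := by
          rw [← hw, ← mul_assoc, Units.inv_mul, one_mul]
        exact this ▸ h3.mul_left _
      obtain ⟨z, hz⟩ := h4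
      rcases hπ.isUnit_or_isUnit hz with h | h
      · exact (hβi c).not_isUnit h
      · exact hβπ c ⟨h.unit, by rw [IsUnit.unit_spec]; exact hz.symm⟩
    -- build q+1 pairwise non-associated atoms, contradiction
    haveI : Fintype (GaloisField p a) := Fintype.ofFinite _
    have hcard : Fintype.card (GaloisField p a) = p ^ a := by
      rw [← Nat.card_eq_fintype_card]
      exact GaloisField.card p a ha.ne'
    let e : Fin (p ^ a) ≃ GaloisField p a := (Fintype.equivFinOfCardEq hcard).symm
    apply hcon
    refine ⟨fun i => if h : (i : ℕ) < p ^ a then β (e ⟨i, h⟩) else π, ?_, ?_⟩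
    · intro i
      dsimp only
      split
      · exact hβi _
      · exact hπ
    · intro i j hij
      dsimp only
      split <;> split
      · rename_i h1 h2
        apply hββ
        intro hed
        apply hij
        have hv : (⟨(i : ℕ), h1⟩ : Fin (p ^ a)) = ⟨(j : ℕ), h2⟩ := e.injective hed
        have hv2 : (i : ℕ) = (j : ℕ) := by simpa using hv
        exact Fin.ext hv2
      · exact hβπ _
      · rename_i h1 h2
        intro hass
        exact hβπ _ hass.symm
      · rename_i h1 h2
        exfalso
        apply hij
        apply Fin.ext
        have hi : (i : ℕ) = p ^ a :=
          le_antisymm (Nat.lt_succ_iff.mp i.isLt) (not_lt.mp h1)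
        have hj : (j : ℕ) = p ^ a :=
          le_antisymm (Nat.lt_succ_iff.mp j.isLt) (not_lt.mp h2)
        rw [hi, hj]
  -- π is not prime : get a bad product
  have hex : ∃ u v : R, π ∣ u * v ∧ ¬ π ∣ u ∧ ¬ π ∣ v := by
    by_contra h
    push_neg at h
    exact hpf π ⟨hπ.ne_zero, hπ.not_isUnit, fun u v huv =>
      or_iff_not_imp_left.mpr (h u v huv)⟩
  obtain ⟨u, v, hdvd, hnu, hnv⟩ := hex
  have hu0 : u ≠ 0 := fun h => hnu (h ▸ dvd_zero π)
  have hv0 : v ≠ 0 := fun h => hnv (h ▸ dvd_zero π)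
  have huu : ¬ IsUnit u := by
    intro h
    obtain ⟨w, hw⟩ := h
    apply hnv
    have : v = (↑w⁻¹ : R) * (u * v) := by rw [← hw, ← mul_assoc, Units.inv_mul, one_mul]
    exact this ▸ hdvd.mul_left _
  have hvu : ¬ IsUnit v := by
    intro h
    obtain ⟨w, hw⟩ := h
    apply hnu
    have : u = (↑w⁻¹ : R) * (u * v) := by
      rw [← hw, mul_comm u, ← mul_assoc, Units.inv_mul, one_mul]
    exact this ▸ hdvd.mul_left _
  obtain ⟨s1, hs1i, hs1p⟩ := hatomic u hu0 huu
  obtain ⟨s2, hs2i, hs2p⟩ := hatomic v hv0 hvu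
  have hall : ∀ α ∈ s1 + s2, ∃ w : Rˣ, π ∣ α - w := by
    intro α hα
    rcases Multiset.mem_add.mp hα with hα | hα
    · refine key α (hs1i α hα) ?_
      intro hass
      exact hnu (hass.symm.dvd.trans ((Multiset.dvd_prod hα).trans hs1p.dvd))
    · refine key α (hs2i α hα) ?_
      intro hass
      exact hnv (hass.symm.dvd.trans ((Multiset.dvd_prod hα).trans hs2p.dvd))
  obtain ⟨w, hw⟩ := prod_sub_unit π (s1 + s2) hall
  have hprod : π ∣ (s1 + s2).prod := by
    rw [Multiset.prod_add, hs1p, hs2p]; exact hdvd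
  have : π ∣ (w : R) := by
    have := dvd_sub hprod hw
    rwa [sub_sub_cancel] at this
  exact hπ.not_isUnit (isUnit_of_dvd_unit this w.isUnit)
end

section
/- For every integer n ≥ 18 there exists a prime number p with n/2 − 1 < p ≤ n − 7 (equivalently, 2·p > n − 2 and p ≤ n − 7). -/
/-!
Erdős' proof of Bertrand's postulate has enough room to spare for a prime in `(m, 2m - 6]`. If there
were no prime in `(m, 2m - 6]`, the primes `p ≤ 2m/3` contribute at most
`(2m)^√(2m) · 4^(2m/3)` to `C(2m, m)`, those in `(2m/3, m]` do not divide it, and each of the six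
candidates in `(2m - 6, 2m]` contributes at most `2m`. This contradicts `4^m < m · C(2m, m)` once
`m ≥ 2048`, by concavity of the logarithm of the ratio of the two sides. Taking `m = (n - 1) / 2`
settles `n > 4096`; below that a chain of primes, each window `[p + 7, 2p + 1]` overlapping the
next, covers `18 ≤ n ≤ 4096`.
-/

open Real Set

/-- `x (2x)^(√(2x) + k) 4^(2x/3) ≤ 4^x` holds exactly when `bertrandRatio k x ≤ 1`. -/
noncomputable def bertrandRatio (k x : ℝ) : ℝ :=
  x * (2 * x) ^ (√(2 * x) + k) / 4 ^ (x / 3)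

theorem ConcaveOn.comp_const_mul {s : Set ℝ} {g : ℝ → ℝ} (hg : ConcaveOn ℝ s g) (c : ℝ) :
    ConcaveOn ℝ ((c * ·) ⁻¹' s) (fun x => g (c * x)) :=
  hg.comp_linearMap (c • LinearMap.id)

theorem concaveOn_sqrt_add_mul_log {k : ℝ} (hk : 0 ≤ k) :
    ConcaveOn ℝ (Ioi 1) (fun y => (√y + k) * log y) := by
  have hlog := strictConcaveOn_log_Ioi.concaveOn.subset (Ioi_subset_Ioi zero_le_one) (convex_Ioi 1)
  refine (strictConcaveOn_sqrt_mul_log_Ioi.concaveOn.add (hlog.smul hk)).congr fun y _ => ?_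
  simp only [Pi.add_apply, smul_eq_mul, add_mul]

theorem concaveOn_log_bertrandRatio {k : ℝ} (hk : 0 ≤ k) :
    ConcaveOn ℝ (Ioi (1 / 2)) (fun x => log (bertrandRatio k x)) := by
  have hlog := strictConcaveOn_log_Ioi.concaveOn.subset (Ioi_subset_Ioi (by norm_num))
    (convex_Ioi (1 / 2))
  have hmid := (concaveOn_sqrt_add_mul_log hk).comp_const_mul 2
  rw [preimage_const_mul_Ioi₀ _ two_pos] at hmid
  refine ((hlog.add hmid).sub ((convexOn_id (convex_Ioi _)).smul
    (by positivity : 0 ≤ log 4 / 3))).congr fun x (hx : 1 / 2 < x) => ?_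
  have hx : 0 < x := by linarith
  have h2x : 0 < 2 * x := by positivity
  simp only [bertrandRatio, Pi.add_apply, Pi.sub_apply, id, smul_eq_mul]
  rw [log_div (by positivity) (by positivity), log_mul hx.ne' (by positivity),
    log_rpow h2x, log_rpow four_pos]
  ring

theorem one_le_bertrandRatio_6_18 : 1 ≤ bertrandRatio 6 18 := by
  have h : √(2 * 18 : ℝ) = 6 := by
    rw [show (2 * 18 : ℝ) = 6 ^ 2 by norm_num, sqrt_sq (by norm_num)]
  rw [bertrandRatio, h, one_le_div (by positivity)]
  norm_num

theorem bertrandRatio_6_2048_le_one : bertrandRatio 6 2048 ≤ 1 := by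
  have h : √(2 * 2048 : ℝ) = 64 := by
    rw [show (2 * 2048 : ℝ) = 64 ^ 2 by norm_num, sqrt_sq (by norm_num)]
  rw [bertrandRatio, h, div_le_one (by positivity)]
  calc (2048 : ℝ) * (2 * 2048) ^ ((64 : ℝ) + 6) = 2 ^ (851 : ℝ) := by
        rw [show (64 : ℝ) + 6 = (70 : ℕ) by norm_num, show (851 : ℝ) = (851 : ℕ) by norm_num,
          rpow_natCast, rpow_natCast, show (2048 : ℝ) = 2 ^ 11 by norm_num, ← pow_succ',
          ← pow_mul, ← pow_add]
    _ ≤ 2 ^ (2 * (2048 / 3) : ℝ) := rpow_le_rpow_of_exponent_le (by norm_num) (by norm_num)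
    _ = 4 ^ ((2048 : ℝ) / 3) := by rw [rpow_mul (by norm_num)]; norm_num

theorem bertrandRatio_le_one {x : ℝ} (hx : 2048 ≤ x) : bertrandRatio 6 x ≤ 1 := by
  have hpos : ∀ y, 0 < y → 0 < bertrandRatio 6 y := fun y hy => by
    unfold bertrandRatio; positivity
  have h2048 := log_nonpos (hpos 2048 (by norm_num)).le bertrandRatio_6_2048_le_one
  -- a concave function that does not increase from 18 to 2048 cannot increase after 2048
  have hlog := (concaveOn_log_bertrandRatio (by norm_num : (0 : ℝ) ≤ 6)).right_le_of_le_left''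
    (x := 18) (by norm_num [mem_Ioi]) (mem_Ioi.2 (by linarith)) (by norm_num) hx
    (h2048.trans (log_nonneg one_le_bertrandRatio_6_18))
  exact (log_nonpos_iff (hpos x (by linarith)).le).1 (hlog.trans h2048)

theorem real_main_inequality_add_six {x : ℝ} (hx : 2048 ≤ x) :
    x * (2 * x) ^ (√(2 * x) + 6) * 4 ^ (2 * x / 3) ≤ 4 ^ x := by
  calc x * (2 * x) ^ (√(2 * x) + 6) * 4 ^ (2 * x / 3)
      = bertrandRatio 6 x * (4 ^ (2 * x / 3) * 4 ^ (x / 3)) := by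
        unfold bertrandRatio; field_simp
    _ = bertrandRatio 6 x * 4 ^ x := by rw [← rpow_add four_pos]; ring_nf
    _ ≤ 4 ^ x := mul_le_of_le_one_left (by positivity) (bertrandRatio_le_one hx)

open Finset

namespace Nat

theorem main_inequality_add_six {n : ℕ} (hn : 2048 ≤ n) :
    n * (2 * n) ^ (sqrt (2 * n) + 6) * 4 ^ (2 * n / 3) ≤ 4 ^ n := by
  rw [← @cast_le ℝ]
  simp only [cast_add, cast_mul, cast_pow, ← rpow_natCast, cast_ofNat]
  refine le_trans ?_ (real_main_inequality_add_six (by exact_mod_cast hn))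
  gcongr
  · exact_mod_cast (by omega : 1 ≤ 2 * n)
  · exact_mod_cast nat_sqrt_le_real_sqrt
  · norm_num
  · exact cast_div_le.trans (by norm_cast)

theorem prod_range_pow_factorization_centralBinom_le {n : ℕ} (hn : 0 < n) :
    ∏ p ∈ range (2 * n / 3 + 1), p ^ (centralBinom n).factorization p
      ≤ (2 * n) ^ sqrt (2 * n) * 4 ^ (2 * n / 3) := by
  set f := fun p => p ^ (centralBinom n).factorization p
  set S := {p ∈ range (2 * n / 3 + 1) | p.Prime}
  have hS : ∏ p ∈ S, f p = ∏ p ∈ range (2 * n / 3 + 1), f p :=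
    prod_filter_of_ne fun p _ hp => by
      contrapose! hp
      simp only [f, factorization_eq_zero_of_not_prime _ hp, pow_zero]
  rw [← hS, ← prod_filter_mul_prod_filter_not S (· ≤ sqrt (2 * n))]
  set small := {p ∈ S | p ≤ sqrt (2 * n)}
  set large := {p ∈ S | ¬p ≤ sqrt (2 * n)}
  gcongr ?_ * ?_
  · have hcard : #small ≤ sqrt (2 * n) := by
      refine (card_le_card fun p hp => ?_).trans (card_Icc 1 _).le
      obtain ⟨hpS, hp⟩ := mem_filter.1 hp
      exact mem_Icc.2 ⟨(mem_filter.1 hpS).2.one_le, hp⟩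
    calc ∏ p ∈ small, f p ≤ ∏ _p ∈ small, 2 * n :=
          prod_le_prod' fun p _ => pow_factorization_choose_le (by omega)
      _ = (2 * n) ^ #small := prod_const _
      _ ≤ (2 * n) ^ sqrt (2 * n) := pow_right_mono₀ (by omega) hcard
  · calc ∏ p ∈ large, f p ≤ ∏ p ∈ large, p :=
          prod_le_prod' fun p hp => by
            obtain ⟨hpS, hp⟩ := mem_filter.1 hp
            have hv : (centralBinom n).factorization p ≤ 1 :=
              factorization_choose_le_one (sqrt_lt'.1 (not_le.1 hp))
            exact (pow_le_pow_right₀ (mem_filter.1 hpS).2.one_le hv).trans_eq (pow_one p)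
      _ ≤ ∏ p ∈ S, p :=
          prod_le_prod_of_subset_of_one_le' (filter_subset _ _)
            fun p hp _ => (mem_filter.1 hp).2.one_le
      _ ≤ 4 ^ (2 * n / 3) := primorial_le_four_pow _

theorem centralBinom_le_of_no_prime_mem_Ioc {n k : ℕ} (hn : 2 < n) (hk : k ≤ n)
    (no_prime : ∀ p, p.Prime → n < p → 2 * n - k < p) :
    centralBinom n ≤ (2 * n) ^ (sqrt (2 * n) + k) * 4 ^ (2 * n / 3) := by
  set f := fun p => p ^ (centralBinom n).factorization p
  have hsplit : centralBinom n = (∏ p ∈ range (2 * n / 3 + 1), f p) *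
      ((∏ p ∈ Ico (2 * n / 3 + 1) (2 * n + 1 - k), f p) *
        ∏ p ∈ Ico (2 * n + 1 - k) (2 * n + 1), f p) := by
    rw [prod_Ico_consecutive _ (by omega) (by omega), prod_range_mul_prod_Ico _ (by omega)]
    exact (prod_pow_factorization_centralBinom n).symm
  have hmid : ∏ p ∈ Ico (2 * n / 3 + 1) (2 * n + 1 - k), f p = 1 := by
    refine prod_eq_one fun p hp => ?_
    obtain ⟨hlo, hhi⟩ := mem_Ico.1 hp
    by_cases hprime : p.Prime
    · have hpn : p ≤ n := by
        by_contra! hpn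
        have := no_prime p hprime hpn
        omega
      simp only [f, factorization_centralBinom_of_two_mul_self_lt_three_mul hn hpn (by omega),
        pow_zero]
    · simp only [f, factorization_eq_zero_of_not_prime _ hprime, pow_zero]
  have htop : ∏ p ∈ Ico (2 * n + 1 - k) (2 * n + 1), f p ≤ (2 * n) ^ k := by
    calc ∏ p ∈ Ico (2 * n + 1 - k) (2 * n + 1), f p
          ≤ ∏ _p ∈ Ico (2 * n + 1 - k) (2 * n + 1), 2 * n :=
          prod_le_prod' fun p _ => pow_factorization_choose_le (by omega)
      _ = (2 * n) ^ k := by rw [prod_const, card_Ico]; congr 1; omega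
  calc centralBinom n ≤ ((2 * n) ^ sqrt (2 * n) * 4 ^ (2 * n / 3)) * (1 * (2 * n) ^ k) := by
        rw [hsplit, hmid]
        gcongr
        exact prod_range_pow_factorization_centralBinom_le (by omega)
    _ = (2 * n) ^ (sqrt (2 * n) + k) * 4 ^ (2 * n / 3) := by ring

theorem exists_prime_lt_and_le_two_mul_sub_six {n : ℕ} (hn : 2048 ≤ n) :
    ∃ p, p.Prime ∧ n < p ∧ p ≤ 2 * n - 6 := by
  by_contra! no_prime
  have hupper := centralBinom_le_of_no_prime_mem_Ioc (by omega) (by omega) no_prime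
  have hlower := four_pow_lt_mul_centralBinom n (by omega)
  have hmain := main_inequality_add_six hn
  rw [mul_assoc] at hmain
  exact (hlower.trans_le ((Nat.mul_le_mul_left n hupper).trans hmain)).false

end Nat

theorem exists_prime_of_le_two_mul_add_one {n q p : ℕ} (hp : p.Prime)
    (hq : q ≤ 2 * p + 1) (H : n ≤ p + 6 → ∃ r, r.Prime ∧ n - 2 < 2 * r ∧ r ≤ n - 7)
    (hn : n ≤ q) : ∃ r, r.Prime ∧ n - 2 < 2 * r ∧ r ≤ n - 7 := by
  by_cases hpn : p + 7 ≤ n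
  · exact ⟨p, hp, by omega, by omega⟩
  · exact H (by omega)

theorem stmt18 (n : ℕ) (hn : 18 ≤ n) :
    ∃ p : ℕ, p.Prime ∧ n - 2 < 2 * p ∧ p ≤ n - 7 := by
  rcases le_or_gt n 4096 with hsmall | hlarge
  · revert hsmall
    refine exists_prime_of_le_two_mul_add_one (p := 2069) (by norm_num) (by norm_num) ?_
    refine exists_prime_of_le_two_mul_add_one (p := 1039) (by norm_num) (by norm_num) ?_
    refine exists_prime_of_le_two_mul_add_one (p := 523) (by norm_num) (by norm_num) ?_
    refine exists_prime_of_le_two_mul_add_one (p := 271) (by norm_num) (by norm_num) ?_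
    refine exists_prime_of_le_two_mul_add_one (p := 139) (by norm_num) (by norm_num) ?_
    refine exists_prime_of_le_two_mul_add_one (p := 73) (by norm_num) (by norm_num) ?_
    refine exists_prime_of_le_two_mul_add_one (p := 41) (by norm_num) (by norm_num) ?_
    refine exists_prime_of_le_two_mul_add_one (p := 23) (by norm_num) (by norm_num) ?_
    refine exists_prime_of_le_two_mul_add_one (p := 17) (by norm_num) (by norm_num) ?_
    refine exists_prime_of_le_two_mul_add_one (p := 11) (by norm_num) (by norm_num) ?_
    omega
  · obtain ⟨p, hp, hlo, hhi⟩ :=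
      Nat.exists_prime_lt_and_le_two_mul_sub_six (n := (n - 1) / 2) (by omega)
    exact ⟨p, hp, by omega, by omega⟩
end

section
/- Let R be a Noetherian integral domain of Krull dimension one with finitely many maximal ideals. Then R has a prime element if and only if there exists a maximal ideal 𝔪 of R such that the localization of R at 𝔪 is a discrete valuation ring. -/
/-! A prime element `p` spans a nonzero prime ideal, which is maximal since `R` has dimension one,
and localizing a Noetherian domain at a nonzero principal prime gives a local domain with nonzero
principal maximal ideal, i.e. a DVR.

Conversely, if `R_𝔪` is a DVR, its maximal ideal is generated by the image of some `a ∈ 𝔪`. As `R`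
has only finitely many maximal ideals, the Chinese remainder theorem gives `r ≡ a mod 𝔪²` lying in
no other maximal ideal. Then `(r)` and `𝔪` agree after localizing at every maximal ideal, so
`𝔪 = (r)` and `r` is prime. -/

open IsLocalRing

section

variable {R : Type*} [CommRing R]

theorem IsLocalRing.maximalIdeal_eq_span_singleton_of_sub_mem_sq [IsLocalRing R] {x y : R}
    (hy : maximalIdeal R = Ideal.span {y}) (hxy : x - y ∈ maximalIdeal R ^ 2) :
    maximalIdeal R = Ideal.span {x} := by
  rw [hy, Ideal.span_singleton_pow, Ideal.mem_span_singleton] at hxy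
  obtain ⟨c, hc⟩ := hxy
  have hyc : -(y * c) ∈ maximalIdeal R :=
    hy ▸ neg_mem (Ideal.mul_mem_right c _ (Ideal.mem_span_singleton_self y))
  have hx : x = y * (1 - -(y * c)) := by linear_combination hc
  rw [hy, hx, Ideal.span_singleton_mul_right_unit
    (isUnit_one_sub_self_of_mem_nonunits _ ((mem_maximalIdeal _).mp hyc))]

theorem Localization.AtPrime.exists_mem_maximalIdeal_eq_span_algebraMap {𝔪 : Ideal R} [𝔪.IsPrime]
    (h : (maximalIdeal (Localization.AtPrime 𝔪)).IsPrincipal) :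
    ∃ a ∈ 𝔪, maximalIdeal (Localization.AtPrime 𝔪) =
      Ideal.span {algebraMap R (Localization.AtPrime 𝔪) a} := by
  obtain ⟨π, hπ⟩ := h
  have hπ𝔪 : π ∈ 𝔪.map (algebraMap R (Localization.AtPrime 𝔪)) := by
    rw [Localization.AtPrime.map_eq_maximalIdeal, hπ]
    exact Ideal.mem_span_singleton_self π
  obtain ⟨⟨⟨a, ha⟩, s⟩, hs⟩ := (IsLocalization.mem_map_algebraMap_iff 𝔪.primeCompl _).mp hπ𝔪
  refine ⟨a, ha, ?_⟩
  rw [← hs, Ideal.span_singleton_mul_right_unit (IsLocalization.map_units _ s)]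
  exact hπ

theorem Ideal.IsMaximal.exists_sub_mem_pow_forall_notMem {𝔪 : Ideal R} (h𝔪 : 𝔪.IsMaximal)
    (hfin : {I : Ideal R | I.IsMaximal}.Finite) (a : R) (n : ℕ) :
    ∃ r, r - a ∈ 𝔪 ^ n ∧ ∀ P : Ideal R, P.IsMaximal → P ≠ 𝔪 → r ∉ P := by
  classical
  have hcop : IsCoprime (𝔪 ^ n) (⨅ P ∈ hfin.toFinset.erase 𝔪, P) :=
    Ideal.isCoprime_biInf fun P hP => by
      obtain ⟨hP𝔪, hP⟩ := Finset.mem_erase.mp hP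
      exact (Ideal.isCoprime_iff_sup_eq.mpr
        (h𝔪.coprime_of_ne (hfin.mem_toFinset.mp hP) hP𝔪.symm)).pow_left
  obtain ⟨u, hu, v, hv, huv⟩ := hcop.exists
  -- `a * v + u` is `a` modulo `𝔪 ^ n` and `1` modulo every other maximal ideal.
  refine ⟨a * v + u, ?_, fun P hP hP𝔪 hrP => hP.ne_top ((P.eq_top_iff_one).mpr ?_)⟩
  · have : a * v + u - a = (1 - a) * u := by linear_combination a * huv
    exact this ▸ Ideal.mul_mem_left _ _ hu
  · have hvP : v ∈ P := Ideal.mem_iInf.mp (Ideal.mem_iInf.mp hv P)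
      (Finset.mem_erase.mpr ⟨hP𝔪, hfin.mem_toFinset.mpr hP⟩)
    have : (1 : R) = (a * v + u) - (a - 1) * v := by linear_combination -huv
    exact this ▸ P.sub_mem hrP (P.mul_mem_left _ hvP)

theorem Ideal.eq_span_singleton_of_maximalIdeal_localization {𝔪 : Ideal R} [𝔪.IsMaximal] {r : R}
    (hr : maximalIdeal (Localization.AtPrime 𝔪) =
      Ideal.span {algebraMap R (Localization.AtPrime 𝔪) r})
    (hrP : ∀ P : Ideal R, P.IsMaximal → P ≠ 𝔪 → r ∉ P) : 𝔪 = Ideal.span {r} := by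
  refine Ideal.eq_of_localization_maximal fun P hP => ?_
  by_cases hP𝔪 : P = 𝔪
  · subst hP𝔪
    rw [Localization.AtPrime.map_eq_maximalIdeal, Ideal.map_span, Set.image_singleton, hr]
  · rw [IsLocalization.AtPrime.map_eq_top_of_not_le _
        fun h => hP𝔪 (Ideal.IsMaximal.eq_of_le ‹_› hP.ne_top h).symm,
      IsLocalization.AtPrime.map_eq_top_of_not_le _
        fun h => hrP P hP hP𝔪 (h (Ideal.mem_span_singleton_self r))]

theorem Ideal.isPrincipal_of_isPrincipal_maximalIdeal_localization {𝔪 : Ideal R}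
    [𝔪.IsMaximal] (hfin : {I : Ideal R | I.IsMaximal}.Finite)
    (h : (maximalIdeal (Localization.AtPrime 𝔪)).IsPrincipal) : 𝔪.IsPrincipal := by
  obtain ⟨a, ha𝔪, ha⟩ := Localization.AtPrime.exists_mem_maximalIdeal_eq_span_algebraMap h
  -- Changing `a` modulo `𝔪 ^ 2` changes its image in the localization only by a unit factor.
  obtain ⟨r, hra, hrP⟩ := Ideal.IsMaximal.exists_sub_mem_pow_forall_notMem ‹_› hfin a 2
  have hr : maximalIdeal (Localization.AtPrime 𝔪) =
      Ideal.span {algebraMap R (Localization.AtPrime 𝔪) r} := by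
    refine maximalIdeal_eq_span_singleton_of_sub_mem_sq ha ?_
    rw [← map_sub, ← Localization.AtPrime.map_eq_maximalIdeal, ← Ideal.map_pow]
    exact Ideal.mem_map_of_mem _ hra
  exact ⟨r, Ideal.eq_span_singleton_of_maximalIdeal_localization hr hrP⟩

theorem Localization.AtPrime.isDiscreteValuationRing_of_isPrincipal [IsDomain R]
    [IsNoetherianRing R] {P : Ideal R} [P.IsPrime] (hP : P ≠ ⊥) (h : P.IsPrincipal) :
    IsDiscreteValuationRing (Localization.AtPrime P) := by
  have hM := Localization.AtPrime.map_eq_maximalIdeal (I := P)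
  have hM0 : maximalIdeal (Localization.AtPrime P) ≠ ⊥ := by
    rwa [← hM, Ne, Ideal.map_eq_bot_iff_of_injective
      (IsLocalization.injective _ P.primeCompl_le_nonZeroDivisors)]
  have hnf : ¬ IsField (Localization.AtPrime P) :=
    fun hf => hM0 (isField_iff_maximalIdeal_eq.mp hf)
  obtain ⟨p, rfl⟩ := h
  have hMp : (maximalIdeal (Localization.AtPrime (Ideal.span {p}))).IsPrincipal := by
    rw [← hM, Ideal.map_span, Set.image_singleton]
    exact ⟨⟨_, rfl⟩⟩
  exact ((IsDiscreteValuationRing.TFAE _ hnf).out 0 4).mpr hMp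

end

theorem stmt19_general (R : Type*) [CommRing R] [IsDomain R] [IsNoetherianRing R]
    (hdim : ∀ P : Ideal R, P.IsPrime → P ≠ ⊥ → P.IsMaximal)
    (hfin : {I : Ideal R | I.IsMaximal}.Finite) :
    (∃ p : R, Prime p) ↔
      ∃ (𝔪 : Ideal R) (_ : 𝔪.IsMaximal),
        IsDiscreteValuationRing (Localization.AtPrime 𝔪) := by
  constructor
  · rintro ⟨p, hp⟩
    have hp0 : Ideal.span {p} ≠ ⊥ := mt Ideal.span_singleton_eq_bot.mp hp.ne_zero
    have hprime := (Ideal.span_singleton_prime hp.ne_zero).mpr hp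
    exact ⟨_, hdim _ hprime hp0,
      Localization.AtPrime.isDiscreteValuationRing_of_isPrincipal hp0 ⟨p, rfl⟩⟩
  · rintro ⟨𝔪, h𝔪, hdvr⟩
    obtain ⟨r, hr⟩ := Ideal.isPrincipal_of_isPrincipal_maximalIdeal_localization hfin
      (IsPrincipalIdealRing.principal (maximalIdeal (Localization.AtPrime 𝔪)))
    rw [Ideal.submodule_span_eq] at hr
    have h𝔪0 : 𝔪 ≠ ⊥ := by
      rintro rfl
      refine IsDiscreteValuationRing.not_a_field (Localization.AtPrime (⊥ : Ideal R)) ?_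
      rw [← Localization.AtPrime.map_eq_maximalIdeal, Ideal.map_bot]
    have hr0 : r ≠ 0 := by
      rintro rfl
      exact h𝔪0 (by rwa [Ideal.span_singleton_eq_bot.mpr rfl] at hr)
    exact ⟨r, (Ideal.span_singleton_prime hr0).mp (hr ▸ h𝔪.isPrime)⟩

theorem stmt19 (R : Type*) [CommRing R] [IsDomain R] [IsNoetherianRing R]
    (hdim : ∀ P : Ideal R, P.IsPrime → P ≠ ⊥ → P.IsMaximal) (hnf : ¬ IsField R)
    (hfin : {I : Ideal R | I.IsMaximal}.Finite) :
    (∃ p : R, Prime p) ↔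
      ∃ (𝔪 : Ideal R) (_ : 𝔪.IsMaximal),
        IsDiscreteValuationRing (Localization.AtPrime 𝔪) :=
  stmt19_general R hdim hfin
end
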